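/- arXiv:1308.4035 — 4 statements merged into one kernel-verified Lean document; each statement's English description precedes it below -/
import Mathlib

section
/- (Monotonicity for factors) Let (S,v) and (T,w) be normed semigroups, φ : S → S and ψ : T → T contractive semigroup endomorphisms, and α : T → S a surjective contractive semigroup homomorphism satisfying α ∘ ψ = φ ∘ α. Then h_S(φ) ≤ h_S(ψ). -/
open scoped ENNReal

/-- The `n`-th trajectory (with `traj φ x n = T_{n+1}(φ,x) = x·φ(x)·…·φⁿ(x)`). -/
def traj {S : Type*} [Semigroup S] (φ : S → S) (x : S) : ℕ → S
  | 0 => x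
  | n + 1 => traj φ x n * φ^[n + 1] x

/-- The semigroup entropy of `φ` at `x`: `h_S(φ,x) = lim_n v(T_n(φ,x))/n`
(the limit exists for contractive endomorphisms, and equals the `limsup`). -/
noncomputable def hloc {S : Type*} [Semigroup S] (v : S → ℝ) (φ : S → S) (x : S) : ℝ :=
  Filter.limsup (fun n : ℕ => v (traj φ x n) / ((n : ℝ) + 1)) Filter.atTop

/-- The semigroup entropy `h_S(φ) = sup_{x ∈ S} h_S(φ,x) ∈ [0,∞]`. -/
noncomputable def hent {S : Type*} [Semigroup S] (v : S → ℝ) (φ : S → S) : ℝ≥0∞ :=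
  ⨆ x : S, ENNReal.ofReal (hloc v φ x)

/-- **Monotonicity for factors.** If `α : T → S` is a surjective contractive
semigroup homomorphism between normed semigroups with `α ∘ ψ = φ ∘ α`, then
`h_S(φ) ≤ h_S(ψ)`. -/
theorem statement_3 {S T : Type*} [Semigroup S] [Semigroup T]
    (v : S → ℝ) (w : T → ℝ)
    (hv0 : ∀ x : S, 0 ≤ v x) (hvmul : ∀ x y : S, v (x * y) ≤ v x + v y)
    (hw0 : ∀ x : T, 0 ≤ w x) (hwmul : ∀ x y : T, w (x * y) ≤ w x + w y)
    (φ : S → S) (hφmul : ∀ x y : S, φ (x * y) = φ x * φ y)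
    (hφcontr : ∀ x : S, v (φ x) ≤ v x)
    (ψ : T → T) (hψmul : ∀ x y : T, ψ (x * y) = ψ x * ψ y)
    (hψcontr : ∀ x : T, w (ψ x) ≤ w x)
    (α : T → S) (hαmul : ∀ x y : T, α (x * y) = α x * α y)
    (hαcontr : ∀ x : T, v (α x) ≤ w x)
    (hαsurj : Function.Surjective α)
    (hcomm : ∀ x : T, α (ψ x) = φ (α x)) :
    hent v φ ≤ hent w ψ := by
  rw [hent]
  apply iSup_le
  intro x
  obtain ⟨t, rfl⟩ := hαsurj x
  -- α maps trajectories of ψ to trajectories of φ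
  have hiter : ∀ n : ℕ, ∀ u : T, α (ψ^[n] u) = φ^[n] (α u) := by
    intro n
    induction n with
    | zero => intro u; simp
    | succ n ih =>
      intro u
      rw [Function.iterate_succ_apply, Function.iterate_succ_apply, ih, hcomm]
  have htraj : ∀ n : ℕ, α (traj ψ t n) = traj φ (α t) n := by
    intro n
    induction n with
    | zero => rfl
    | succ n ih => rw [traj, traj, hαmul, ih, hiter]
  -- bound on w along trajectories
  have hwiter : ∀ n : ℕ, ∀ u : T, w (ψ^[n] u) ≤ w u := by
    intro n
    induction n with
    | zero => intro u; simp
    | succ n ih =>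
      intro u
      rw [Function.iterate_succ_apply']
      exact le_trans (hψcontr _) (ih u)
  have hwtraj : ∀ n : ℕ, w (traj ψ t n) ≤ ((n : ℝ) + 1) * w t := by
    intro n
    induction n with
    | zero => simp [traj]
    | succ n ih =>
      rw [traj]
      calc w (traj ψ t n * ψ^[n+1] t) ≤ w (traj ψ t n) + w (ψ^[n+1] t) := hwmul _ _
        _ ≤ ((n : ℝ) + 1) * w t + w t := add_le_add ih (hwiter _ _)
        _ = ((((n + 1 : ℕ)) : ℝ) + 1) * w t := by push_cast; ring
  have hle : hloc v φ (α t) ≤ hloc w ψ t := by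
    apply Filter.limsup_le_limsup
    · filter_upwards with n
      apply div_le_div_of_nonneg_right _ (by positivity)
      calc v (traj φ (α t) n) = v (α (traj ψ t n)) := by rw [htraj]
        _ ≤ w (traj ψ t n) := hαcontr _
    · apply Filter.isCoboundedUnder_le_of_le Filter.atTop (x := 0)
      intro n
      exact div_nonneg (hv0 _) (by positivity)
    · refine Filter.isBoundedUnder_of ⟨w t, fun n => ?_⟩
      rw [div_le_iff₀ (by positivity)]
      calc w (traj ψ t n) ≤ ((n : ℝ) + 1) * w t := hwtraj n
        _ = w t * ((n : ℝ) + 1) := by ring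
  exact le_trans (ENNReal.ofReal_le_ofReal hle) (le_iSup (fun y => ENNReal.ofReal (hloc w ψ y)) t)
end

section
/- (Continuity for direct limits) Let (S,v) be a normed semigroup, φ : S → S a contractive semigroup endomorphism, and {S_i : i ∈ I} a directed family of φ-invariant subsemigroups of S (each with the restricted norm) whose union is S. Then h_S(φ) = sup_{i∈I} h_S(φ↾_{S_i}). -/
open scoped ENNReal

/-- Trajectories are preserved by a multiplicative, equivariant map. -/
lemma traj_map {S T : Type*} [Semigroup S] [Semigroup T] (f : S → T)
    (hf : ∀ x y, f (x * y) = f x * f y) (φ : S → S) (ψ : T → T)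
    (hcomm : ∀ x, f (φ x) = ψ (f x)) (x : S) : ∀ n, f (traj φ x n) = traj ψ (f x) n := by
  have hiter : ∀ n x, f (φ^[n] x) = ψ^[n] (f x) := by
    intro n
    induction n with
    | zero => intro x; simp
    | succ n ih =>
      intro x
      rw [Function.iterate_succ_apply, Function.iterate_succ_apply, ih, hcomm]
  intro n
  induction n with
  | zero => rfl
  | succ n ih =>
    simp only [traj, hf, ih, hiter]

/-- **Continuity for direct limits.** If `{Sᵢ : i ∈ I}` is a directed family
of `φ`-invariant subsemigroups of the normed semigroup `(S,v)` (each with the restricted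
norm) whose union is `S`, then `h_S(φ) = sup_i h_S(φ↾Sᵢ)`. -/
theorem statement_7 {S : Type*} [Semigroup S] (v : S → ℝ)
    (hv0 : ∀ x : S, 0 ≤ v x)
    (hvmul : ∀ x y : S, v (x * y) ≤ v x + v y)
    (φ : S → S) (hφmul : ∀ x y : S, φ (x * y) = φ x * φ y)
    (hφcontr : ∀ x : S, v (φ x) ≤ v x)
    {ι : Type*} (Si : ι → Subsemigroup S)
    (hdir : ∀ i j : ι, ∃ k : ι, Si i ≤ Si k ∧ Si j ≤ Si k)
    (hinv : ∀ i : ι, ∀ x ∈ Si i, φ x ∈ Si i)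
    (hcov : ∀ x : S, ∃ i : ι, x ∈ Si i) :
    hent v φ =
      ⨆ i : ι, hent (fun t : Si i => v (t : S)) (fun t : Si i => ⟨φ t, hinv i t t.2⟩) := by
  have key : ∀ (i : ι) (t : Si i),
      hloc (fun t : Si i => v (t : S)) (fun t : Si i => ⟨φ t, hinv i t t.2⟩) t
        = hloc v φ (t : S) := by
    intro i t
    unfold hloc
    congr 1
    funext n
    congr 1
    exact congrArg v (traj_map (fun s : Si i => (s : S)) (fun _ _ => rfl) _ φ
      (fun _ => rfl) t n)
  apply le_antisymm
  · refine iSup_le fun x => ?_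
    obtain ⟨i, hi⟩ := hcov x
    refine le_trans ?_ (le_iSup _ i)
    refine le_trans ?_ (le_iSup _ (⟨x, hi⟩ : Si i))
    rw [key i ⟨x, hi⟩]
  · refine iSup_le fun i => iSup_le fun t => ?_
    rw [key i t]
    exact le_iSup (fun x => ENNReal.ofReal (hloc v φ x)) (t : S)
end

section
/- (Weak Addition Theorem for products) Let (S_1,v_1) and (S_2,v_2) be normed semigroups and φ_i : S_i → S_i contractive semigroup endomorphisms for i = 1,2. Equip S_1 × S_2 with the max-norm v(x_1,x_2) = max{v_1(x_1), v_2(x_2)}. Then h_S(φ_1 × φ_2) = max{h_S(φ_1), h_S(φ_2)}. -/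
open scoped ENNReal

lemma traj_prod {S₁ S₂ : Type*} [Semigroup S₁] [Semigroup S₂]
    (φ₁ : S₁ → S₁) (φ₂ : S₂ → S₂) (x₁ : S₁) (x₂ : S₂) (n : ℕ) :
    traj (Prod.map φ₁ φ₂) (x₁, x₂) n = (traj φ₁ x₁ n, traj φ₂ x₂ n) := by
  induction n with
  | zero => rfl
  | succ n ih => simp [traj, ih, Prod.map_iterate]

lemma traj_bound {S : Type*} [Semigroup S] (v : S → ℝ) (φ : S → S)
    (hv0 : ∀ x, 0 ≤ v x) (hvmul : ∀ x y, v (x * y) ≤ v x + v y)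
    (hcontr : ∀ x, v (φ x) ≤ v x) (x : S) (n : ℕ) :
    v (traj φ x n) ≤ ((n : ℝ) + 1) * v x := by
  have hiter : ∀ k, v (φ^[k] x) ≤ v x := by
    intro k; induction k with
    | zero => simp
    | succ k ih => rw [Function.iterate_succ_apply']; exact (hcontr _).trans ih
  induction n with
  | zero => simp [traj]
  | succ n ih =>
    calc v (traj φ x (n+1)) ≤ v (traj φ x n) + v (φ^[n+1] x) := hvmul _ _
    _ ≤ ((n : ℝ) + 1) * v x + v x := add_le_add ih (hiter _)
    _ = ((n+1 : ℕ) + 1 : ℝ) * v x := by push_cast; ring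

lemma seq_bdd {S : Type*} [Semigroup S] (v : S → ℝ) (φ : S → S)
    (hv0 : ∀ x, 0 ≤ v x) (hvmul : ∀ x y, v (x * y) ≤ v x + v y)
    (hcontr : ∀ x, v (φ x) ≤ v x) (x : S) :
    Filter.IsBoundedUnder (· ≤ ·) Filter.atTop
      (fun n : ℕ => v (traj φ x n) / ((n : ℝ) + 1)) ∧
    Filter.IsCoboundedUnder (· ≤ ·) Filter.atTop
      (fun n : ℕ => v (traj φ x n) / ((n : ℝ) + 1)) := by
  have hpos : ∀ n : ℕ, (0:ℝ) < (n : ℝ) + 1 := fun n => by positivity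
  have hub : ∀ n : ℕ, v (traj φ x n) / ((n : ℝ) + 1) ≤ v x := fun n => by
    rw [div_le_iff₀ (hpos n)]
    simpa [mul_comm] using traj_bound v φ hv0 hvmul hcontr x n
  have hlb : ∀ n : ℕ, (0:ℝ) ≤ v (traj φ x n) / ((n : ℝ) + 1) := fun n =>
    div_nonneg (hv0 _) (hpos n).le
  refine ⟨Filter.isBoundedUnder_of ⟨v x, hub⟩, ?_⟩
  exact (Filter.isBoundedUnder_of (r := (· ≥ ·)) ⟨0, hlb⟩).isCoboundedUnder_le

lemma hloc_prod {S₁ S₂ : Type*} [Semigroup S₁] [Semigroup S₂]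
    (v₁ : S₁ → ℝ) (v₂ : S₂ → ℝ)
    (hv₁0 : ∀ x : S₁, 0 ≤ v₁ x) (hv₁mul : ∀ x y : S₁, v₁ (x * y) ≤ v₁ x + v₁ y)
    (hv₂0 : ∀ x : S₂, 0 ≤ v₂ x) (hv₂mul : ∀ x y : S₂, v₂ (x * y) ≤ v₂ x + v₂ y)
    (φ₁ : S₁ → S₁) (hφ₁contr : ∀ x : S₁, v₁ (φ₁ x) ≤ v₁ x)
    (φ₂ : S₂ → S₂) (hφ₂contr : ∀ x : S₂, v₂ (φ₂ x) ≤ v₂ x)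
    (x₁ : S₁) (x₂ : S₂) :
    hloc (fun p : S₁ × S₂ => max (v₁ p.1) (v₂ p.2)) (Prod.map φ₁ φ₂) (x₁, x₂)
      = max (hloc v₁ φ₁ x₁) (hloc v₂ φ₂ x₂) := by
  obtain ⟨hb1, hc1⟩ := seq_bdd v₁ φ₁ hv₁0 hv₁mul hφ₁contr x₁
  obtain ⟨hb2, hc2⟩ := seq_bdd v₂ φ₂ hv₂0 hv₂mul hφ₂contr x₂
  unfold hloc
  have : (fun n : ℕ => (max (v₁ (traj (Prod.map φ₁ φ₂) (x₁,x₂) n).1)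
      (v₂ (traj (Prod.map φ₁ φ₂) (x₁,x₂) n).2)) / ((n : ℝ) + 1))
      = fun n : ℕ => max (v₁ (traj φ₁ x₁ n) / ((n : ℝ) + 1))
        (v₂ (traj φ₂ x₂ n) / ((n : ℝ) + 1)) := by
    funext n
    rw [traj_prod]
    have hpos : (0:ℝ) < (n : ℝ) + 1 := by positivity
    rw [max_div_div_right hpos.le]
  rw [this]
  exact limsup_max hc1 hc2 hb1 hb2

/-- **Weak Addition Theorem – products.** For contractive endomorphisms
`φᵢ` of normed semigroups `(Sᵢ,vᵢ)` (`i = 1,2`), the endomorphism `φ₁ × φ₂` of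
`S₁ × S₂` with the max-norm satisfies `h_S(φ₁ × φ₂) = max(h_S(φ₁), h_S(φ₂))`. -/
theorem statement_8 {S₁ S₂ : Type*} [Semigroup S₁] [Semigroup S₂]
    [Nonempty S₁] [Nonempty S₂]
    (v₁ : S₁ → ℝ) (v₂ : S₂ → ℝ)
    (hv₁0 : ∀ x : S₁, 0 ≤ v₁ x) (hv₁mul : ∀ x y : S₁, v₁ (x * y) ≤ v₁ x + v₁ y)
    (hv₂0 : ∀ x : S₂, 0 ≤ v₂ x) (hv₂mul : ∀ x y : S₂, v₂ (x * y) ≤ v₂ x + v₂ y)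
    (φ₁ : S₁ → S₁) (hφ₁mul : ∀ x y : S₁, φ₁ (x * y) = φ₁ x * φ₁ y)
    (hφ₁contr : ∀ x : S₁, v₁ (φ₁ x) ≤ v₁ x)
    (φ₂ : S₂ → S₂) (hφ₂mul : ∀ x y : S₂, φ₂ (x * y) = φ₂ x * φ₂ y)
    (hφ₂contr : ∀ x : S₂, v₂ (φ₂ x) ≤ v₂ x) :
    hent (fun p : S₁ × S₂ => max (v₁ p.1) (v₂ p.2)) (Prod.map φ₁ φ₂)
      = max (hent v₁ φ₁) (hent v₂ φ₂) := by
  have key : ∀ x₁ : S₁, ∀ x₂ : S₂,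
      hloc (fun p : S₁ × S₂ => max (v₁ p.1) (v₂ p.2)) (Prod.map φ₁ φ₂) (x₁, x₂)
        = max (hloc v₁ φ₁ x₁) (hloc v₂ φ₂ x₂) := fun x₁ x₂ =>
    hloc_prod v₁ v₂ hv₁0 hv₁mul hv₂0 hv₂mul φ₁ hφ₁contr φ₂ hφ₂contr x₁ x₂
  have hmax : ∀ a b : ℝ, ENNReal.ofReal (max a b) = max (ENNReal.ofReal a) (ENNReal.ofReal b) :=
    fun a b => Monotone.map_max (fun _ _ h => ENNReal.ofReal_le_ofReal h)
  unfold hent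
  apply le_antisymm
  · refine iSup_le fun p => ?_
    obtain ⟨x₁, x₂⟩ := p
    rw [key x₁ x₂, hmax]
    exact max_le_max (le_iSup (fun x => ENNReal.ofReal (hloc v₁ φ₁ x)) x₁)
      (le_iSup (fun x => ENNReal.ofReal (hloc v₂ φ₂ x)) x₂)
  · refine max_le (iSup_le fun x₁ => ?_) (iSup_le fun x₂ => ?_)
    · obtain ⟨y₂⟩ := (inferInstance : Nonempty S₂)
      refine le_trans ?_ (le_iSup _ (x₁, y₂))
      rw [key x₁ y₂, hmax]
      exact le_max_left _ _
    · obtain ⟨y₁⟩ := (inferInstance : Nonempty S₁)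
      refine le_trans ?_ (le_iSup _ (y₁, x₂))
      rw [key y₁ x₂, hmax]
      exact le_max_right _ _
end

section
/- (Bernoulli normalization) Let (M,v) be a normed monoid, and let B(M) = ⊕_{n∈ℕ} M be the direct sum (sequences in M that are eventually 1) with the coproduct norm v_⊕(x) = Σ_{n∈ℕ} v(x_n). Let β_M : B(M) → B(M) be the right Bernoulli shift β_M(x_0, x_1, …) = (1, x_0, x_1, …) and _Mβ : B(M) → B(M) the left Bernoulli shift _Mβ(x_0, x_1, …) = (x_1, x_2, …). Then h_S(β_M) = sup_{x∈M} v(x) and h_S(_Mβ) = 0. -/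
open scoped ENNReal

/-- The direct sum `B(M) = ⊕_{n ∈ ℕ} M`: the submonoid of `ℕ → M` consisting of the
sequences that are eventually `1` (i.e. equal to `1` outside a finite set). -/
def BMon (M : Type*) [Monoid M] : Submonoid (ℕ → M) where
  carrier := {f | (Function.mulSupport f).Finite}
  one_mem' := by simp [Function.mulSupport_one]
  mul_mem' := fun hf hg => ((Set.Finite.union hf hg).subset (Function.mulSupport_mul _ _))

/-- The coproduct norm `v_⊕(x) = Σ_{n ∈ ℕ} v (x n)` on `B(M)`. -/
noncomputable def vOplus {M : Type*} [Monoid M] (v : M → ℝ) (f : BMon M) : ℝ :=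
  ∑ᶠ n : ℕ, v (f.val n)

/-- The underlying function of the right Bernoulli shift. -/
def rshiftFun {M : Type*} [Monoid M] (f : ℕ → M) : ℕ → M
  | 0 => 1
  | n + 1 => f n

theorem rshiftFun_mem {M : Type*} [Monoid M] (f : BMon M) : rshiftFun f.val ∈ BMon M := by
  refine Set.Finite.subset (f.2.image Nat.succ) ?_
  intro n hn
  cases n with
  | zero => exact absurd rfl hn
  | succ k => exact ⟨k, hn, rfl⟩

theorem lshiftFun_mem {M : Type*} [Monoid M] (f : BMon M) :
    (fun n : ℕ => f.val (n + 1)) ∈ BMon M := by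
  refine Set.Finite.subset (f.2.image Nat.pred) ?_
  intro n hn
  exact ⟨n + 1, hn, rfl⟩

/-- The right Bernoulli shift `β_M : B(M) → B(M)`, `(x₀, x₁, …) ↦ (1, x₀, x₁, …)`. -/
def rshift {M : Type*} [Monoid M] (f : BMon M) : BMon M :=
  ⟨rshiftFun f.val, rshiftFun_mem f⟩

/-- The left Bernoulli shift `_Mβ : B(M) → B(M)`, `(x₀, x₁, …) ↦ (x₁, x₂, …)`. -/
def lshift {M : Type*} [Monoid M] (f : BMon M) : BMon M :=
  ⟨fun n => f.val (n + 1), lshiftFun_mem f⟩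


section BernoulliAux

open Filter

variable {M : Type*} [Monoid M]

lemma traj_succ_val (φ : BMon M → BMon M) (f : BMon M) (n m : ℕ) :
    (traj φ f (n+1)).val m = (traj φ f n).val m * (φ^[n+1] f).val m := rfl

lemma rshift_iter_val (f : BMon M) : ∀ k m, ((rshift^[k] f : BMon M)).val m =
    if m < k then 1 else f.val (m - k) := by
  intro k
  induction k with
  | zero => intro m; simp
  | succ k ih =>
    intro m
    rw [Function.iterate_succ_apply']
    cases m with
    | zero => simp [rshift, rshiftFun]
    | succ m =>
      show (rshift^[k] f).val m = _
      rw [ih m]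
      simp [Nat.succ_lt_succ_iff, Nat.succ_sub_succ]

lemma lshift_iter_val (f : BMon M) : ∀ k m, ((lshift^[k] f : BMon M)).val m = f.val (m + k) := by
  intro k
  induction k with
  | zero => intro m; simp
  | succ k ih =>
    intro m
    rw [Function.iterate_succ_apply']
    show (lshift^[k] f).val (m+1) = _
    rw [ih (m+1)]
    ring_nf

lemma traj_rshift_val_eq_one (f : BMon M) (N : ℕ) (hN : ∀ m, N ≤ m → f.val m = 1) :
    ∀ n m, N + n ≤ m → (traj rshift f n).val m = 1 := by
  intro n
  induction n with
  | zero => intro m hm; exact hN m (by omega)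
  | succ n ih =>
    intro m hm
    rw [traj_succ_val, ih m (by omega), rshift_iter_val, one_mul, if_neg (by omega),
      hN _ (by omega)]

/-- Choice of a support bound for `f : BMon M`. -/
lemma exists_bound (f : BMon M) : ∃ N : ℕ, ∀ m, N ≤ m → f.val m = 1 := by
  obtain ⟨N, hN⟩ := f.2.bddAbove
  exact ⟨N + 1, fun m hm => by
    by_contra h
    exact absurd (hN h) (by omega)⟩

variable (v : M → ℝ)

lemma vOplus_le_of_bound (hvone : v 1 = 0) {C : ℝ}
    (hC : ∀ x, v x ≤ C) (g : BMon M) (N : ℕ) (hg : ∀ m, N ≤ m → g.val m = 1) :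
    vOplus v g ≤ N * C := by
  have hsupp : Function.support (fun m => v (g.val m)) ⊆ (Finset.range N : Finset ℕ) := by
    intro m hm
    simp only [Finset.coe_range, Set.mem_Iio]
    by_contra h
    refine hm ?_
    show v (g.val m) = 0
    rw [hg m (le_of_not_gt h), hvone]
  rw [vOplus, finsum_eq_sum_of_support_subset _ hsupp]
  calc ∑ m ∈ Finset.range N, v (g.val m) ≤ ∑ _m ∈ Finset.range N, C :=
        Finset.sum_le_sum fun m _ => hC _
    _ = N * C := by simp [mul_comm]

lemma vOplus_nonneg (hv0 : ∀ x : M, 0 ≤ v x) (g : BMon M) : 0 ≤ vOplus v g :=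
  finsum_nonneg fun m => hv0 _

lemma limsup_div_le {c : ℕ → ℝ} {C : ℝ} (hC0 : 0 ≤ C) (hc0 : ∀ n, 0 ≤ c n) (N : ℕ)
    (hc : ∀ n, c n ≤ ((N : ℝ) + n) * C) :
    Filter.limsup (fun n : ℕ => c n / ((n : ℝ) + 1)) Filter.atTop ≤ C := by
  set a : ℕ → ℝ := fun n => c n / ((n : ℝ) + 1) with ha
  set b : ℕ → ℝ := fun n => C + N * C / ((n : ℝ) + 1) with hb
  have hab : ∀ n, a n ≤ b n := by
    intro n
    have hn1 : (0:ℝ) < (n : ℝ) + 1 := by positivity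
    show c n / ((n:ℝ)+1) ≤ C + (N:ℝ) * C / ((n:ℝ)+1)
    rw [div_le_iff₀ hn1]
    have h2 : (C + (N:ℝ) * C / ((n:ℝ) + 1)) * ((n:ℝ) + 1) = C*((n:ℝ)+1) + (N:ℝ)*C := by
      field_simp
    rw [h2]
    nlinarith [hc n]
  have hbtend : Tendsto b atTop (nhds C) := by
    have h0 : Tendsto (fun n : ℕ => (N : ℝ) * C / ((n : ℝ) + 1)) atTop (nhds 0) := by
      have := (tendsto_const_div_atTop_nhds_zero_nat ((N:ℝ) * C)).comp
        (tendsto_add_atTop_nat 1)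
      simpa [Function.comp_def] using this
    simpa using tendsto_const_nhds.add h0
  have : Filter.limsup a atTop ≤ Filter.limsup b atTop := by
    refine Filter.limsup_le_limsup (Eventually.of_forall hab)
      (isCoboundedUnder_le_of_le atTop (x := 0)
        fun n => div_nonneg (hc0 n) (by positivity))
      hbtend.isBoundedUnder_le
  rwa [hbtend.limsup_eq] at this

lemma hloc_rshift_le (hv0 : ∀ x : M, 0 ≤ v x) (hvone : v 1 = 0) {C : ℝ} (hC0 : 0 ≤ C)
    (hC : ∀ x, v x ≤ C) (f : BMon M) : hloc (vOplus v) rshift f ≤ C := by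
  obtain ⟨N, hN⟩ := exists_bound f
  refine limsup_div_le hC0 (fun n => vOplus_nonneg v hv0 _) N (fun n => ?_)
  have := vOplus_le_of_bound v hvone hC (traj rshift f n) (N + n)
    (fun m hm => traj_rshift_val_eq_one f N hN n m hm)
  calc vOplus v (traj rshift f n) ≤ ((N + n : ℕ) : ℝ) * C := this
    _ = ((N : ℝ) + n) * C := by push_cast; ring

/-- The element `(a, 1, 1, …)` of `B(M)`. -/
def deltaB (a : M) : BMon M :=
  ⟨fun n => if n = 0 then a else 1, by
    refine Set.Finite.subset (Set.finite_singleton 0) ?_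
    intro n hn
    by_contra h
    exact hn (if_neg (by simpa using h))⟩

lemma traj_rshift_deltaB (a : M) :
    ∀ n m, (traj rshift (deltaB a) n).val m = if m ≤ n then a else 1 := by
  have hiter : ∀ k m, ((rshift^[k] (deltaB a) : BMon M)).val m = if m = k then a else 1 := by
    intro k m
    rw [rshift_iter_val]
    rcases lt_trichotomy m k with h | h | h
    · rw [if_pos h, if_neg (by omega)]
    · subst h; simp [deltaB]
    · rw [if_neg (by omega), if_neg (by omega)]
      show (if m - k = 0 then a else 1) = 1
      rw [if_neg (by omega)]
  intro n
  induction n with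
  | zero =>
    intro m
    show (if m = 0 then a else 1) = if m ≤ 0 then a else 1
    simp [Nat.le_zero]
  | succ n ih =>
    intro m
    rw [traj_succ_val, ih m, hiter]
    rcases Nat.lt_trichotomy m (n+1) with h | h | h
    · rw [if_pos (by omega), if_neg (by omega), if_pos (by omega), mul_one]
    · subst h; rw [if_neg (by omega), if_pos rfl, if_pos le_rfl, one_mul]
    · rw [if_neg (by omega), if_neg (by omega), if_neg (by omega), mul_one]

lemma hloc_rshift_deltaB (hvone : v 1 = 0) (a : M) :
    hloc (vOplus v) rshift (deltaB a) = v a := by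
  have hc : ∀ n : ℕ, vOplus v (traj rshift (deltaB a) n) = ((n : ℝ) + 1) * v a := by
    intro n
    have hsupp : Function.support (fun m => v ((traj rshift (deltaB a) n).val m)) ⊆
        (Finset.range (n+1) : Finset ℕ) := by
      intro m hm
      simp only [Finset.coe_range, Set.mem_Iio]
      by_contra h
      refine hm ?_
      show v ((traj rshift (deltaB a) n).val m) = 0
      rw [traj_rshift_deltaB, if_neg (by omega), hvone]
    rw [vOplus, finsum_eq_sum_of_support_subset _ hsupp]
    have : ∀ m ∈ Finset.range (n+1), v ((traj rshift (deltaB a) n).val m) = v a := by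
      intro m hm
      rw [traj_rshift_deltaB, if_pos (by simp at hm; omega)]
    rw [Finset.sum_congr rfl this, Finset.sum_const, Finset.card_range]
    push_cast
    ring
  have heq : (fun n : ℕ => vOplus v (traj rshift (deltaB a) n) / ((n : ℝ) + 1)) =
      fun _ : ℕ => v a := by
    funext n
    rw [hc n]
    field_simp
  rw [hloc, heq, Filter.limsup_const]

lemma traj_lshift_stable (f : BMon M) (N : ℕ) (hN : ∀ m, N ≤ m → f.val m = 1) :
    ∀ n, N ≤ n → traj lshift f n = traj lshift f N := by
  have key : ∀ k, traj lshift f (N + k) = traj lshift f N := by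
    intro k
    induction k with
    | zero => rfl
    | succ k ih =>
      have h1 : (lshift^[N + k + 1] f : BMon M) = 1 := by
        apply Subtype.ext
        funext m
        rw [lshift_iter_val]
        exact hN _ (by omega)
      show traj lshift f (N + k) * lshift^[N + k + 1] f = traj lshift f N
      rw [h1, mul_one, ih]
  intro n hn
  have : n = N + (n - N) := by omega
  rw [this, key]

lemma hloc_lshift (f : BMon M) : hloc (vOplus v) lshift f = 0 := by
  obtain ⟨N, hN⟩ := exists_bound f
  set c : ℝ := vOplus v (traj lshift f N) with hc
  have heq : (fun n : ℕ => c / ((n : ℝ) + 1)) =ᶠ[atTop]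
      (fun n : ℕ => vOplus v (traj lshift f n) / ((n : ℝ) + 1)) := by
    filter_upwards [eventually_ge_atTop N] with n hn
    rw [traj_lshift_stable f N hN n hn]
  have htend : Tendsto (fun n : ℕ => vOplus v (traj lshift f n) / ((n : ℝ) + 1))
      atTop (nhds 0) := by
    refine Tendsto.congr' heq ?_
    have := (tendsto_const_div_atTop_nhds_zero_nat c).comp (tendsto_add_atTop_nat 1)
    simpa [Function.comp_def] using this
  exact htend.limsup_eq

end BernoulliAux

/-- **Bernoulli normalization.** For a normed monoid `(M,v)`, the right
Bernoulli shift on `B(M)` with the coproduct norm has `h_S(β_M) = sup_{x ∈ M} v x`, while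
the left Bernoulli shift has `h_S(_Mβ) = 0`. -/
theorem statement_10 {M : Type*} [Monoid M] (v : M → ℝ)
    (hv0 : ∀ x : M, 0 ≤ v x)
    (hvmul : ∀ x y : M, v (x * y) ≤ v x + v y)
    (hvone : v 1 = 0) :
    hent (vOplus v) rshift = (⨆ x : M, ENNReal.ofReal (v x))
    ∧ hent (vOplus v) lshift = 0 := by
  constructor
  · set S : ℝ≥0∞ := ⨆ x : M, ENNReal.ofReal (v x) with hS
    refine le_antisymm ?_ ?_
    · by_cases htop : S = ⊤
      · rw [htop]; exact le_top
      · set C : ℝ := S.toReal with hCdef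
        have hC0 : 0 ≤ C := ENNReal.toReal_nonneg
        have hC : ∀ x : M, v x ≤ C := by
          intro x
          have h1 : ENNReal.ofReal (v x) ≤ S := le_iSup (fun x => ENNReal.ofReal (v x)) x
          have h2 := ENNReal.toReal_mono htop h1
          rwa [ENNReal.toReal_ofReal (hv0 x)] at h2
        refine iSup_le fun f => ?_
        calc ENNReal.ofReal (hloc (vOplus v) rshift f) ≤ ENNReal.ofReal C :=
              ENNReal.ofReal_le_ofReal (hloc_rshift_le v hv0 hvone hC0 hC f)
          _ = S := ENNReal.ofReal_toReal htop
    · refine iSup_le fun a => ?_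
      refine le_iSup_of_le (deltaB a) ?_
      rw [hloc_rshift_deltaB v hvone a]
  · refine le_antisymm (iSup_le fun f => ?_) (zero_le)
    rw [hloc_lshift v f]
    simp
end
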